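/- For every ISAC network, the maximum free-communication throughput f̃ := max{f : (s*, f) ∈ R}, where s* = Σ_{u ∈ U(A)} c_u is the maximum sensing fidelity, equals the maximum of Σ_{j:(T_x,j)∈E} f_{(T_x,j)} over all families of nonnegative reals (f_e)_{e ∈ E} satisfying: f_e = 0 for every e ∈ E(A); f_{(i,j)} + f_{(j,i)} ≤ c_{{i,j}} for every undirected link {i,j}; f_{(i,T_x)} = 0 whenever (i,T_x) ∈ E; f_{(R_x,j)} = 0 whenever (R_x,j) ∈ E; and flow conservation at every node other than T_x and R_x. -/

import Mathlib

/-!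
Full sensing fidelity forces the sensing rates to use the whole capacity of every link of
`E(A)`, so a valid assignment achieving it carries no communication there; its communication
rates are therefore feasible for the linear program. Conversely, given a feasible `fr`, split the
leftover capacity `c {i,j} - fr (i,j) - fr (j,i)` of each link evenly between its two directions
and spend it all on sensing: this is valid, and on `E(A)`, where `fr` vanishes, it senses at full
capacity.
-/
/-- An ISAC network on a finite node type `V`: a symmetric, irreflexive set of
directed links `E`, a source `Tx`, a sink `Rx`, a nonnegative capacity `c` on
undirected links (unordered pairs), and a sensing region `A`. -/
structure ISACNetwork (V : Type) [Fintype V] [DecidableEq V] where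
  E : Finset (V × V)
  symm : ∀ i j : V, (i, j) ∈ E → (j, i) ∈ E
  irrefl : ∀ i : V, (i, i) ∉ E
  Tx : V
  Rx : V
  TxNeRx : Tx ≠ Rx
  c : Sym2 V → ℝ
  c_nonneg : ∀ u : Sym2 V, 0 ≤ c u
  A : Finset V

namespace ISACNetwork

variable {V : Type} [Fintype V] [DecidableEq V]

/-- `E(A)`: directed links with both endpoints in the sensing region. -/
def EA (N : ISACNetwork V) : Finset (V × V) :=
  N.E.filter fun e => e.1 ∈ N.A ∧ e.2 ∈ N.A

/-- `U(A)`: undirected links with both endpoints in the sensing region. -/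
def UA (N : ISACNetwork V) : Finset (Sym2 V) :=
  N.EA.image (Function.uncurry Sym2.mk)

/-- A valid assignment of communication rates `f` and sensing rates `s`:
nonnegative rates for which there is a nonnegative capacity split `ca` of the
undirected link capacities with `f e + s e ≤ ca e` on each directed link, no
communication into the source or out of the sink, and flow conservation at
every intermediate node. -/
def Valid (N : ISACNetwork V) (f s : V × V → ℝ) : Prop :=
  (∀ e ∈ N.E, 0 ≤ f e) ∧ (∀ e ∈ N.E, 0 ≤ s e) ∧
  ∃ ca : V × V → ℝ,
    (∀ e ∈ N.E, 0 ≤ ca e) ∧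
    (∀ i j : V, (i, j) ∈ N.E → ca (i, j) + ca (j, i) = N.c (Sym2.mk i j)) ∧
    (∀ e ∈ N.E, f e + s e ≤ ca e) ∧
    (∀ i : V, (i, N.Tx) ∈ N.E → f (i, N.Tx) = 0) ∧
    (∀ j : V, (N.Rx, j) ∈ N.E → f (N.Rx, j) = 0) ∧
    (∀ j : V, j ≠ N.Tx → j ≠ N.Rx →
      ∑ i ∈ Finset.univ.filter (fun i => (i, j) ∈ N.E), f (i, j)
        = ∑ k ∈ Finset.univ.filter (fun k => (j, k) ∈ N.E), f (j, k))

/-- The sensing fidelity achieved by a sensing-rate assignment. -/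
def sensOf (N : ISACNetwork V) (s : V × V → ℝ) : ℝ := ∑ e ∈ N.EA, s e

/-- The throughput achieved by a communication-rate assignment. -/
def flowOf (N : ISACNetwork V) (f : V × V → ℝ) : ℝ :=
  ∑ j ∈ Finset.univ.filter (fun j => (N.Tx, j) ∈ N.E), f (N.Tx, j)

/-- The sensing–throughput region: all pairs `(s, f)` achieved by a valid
assignment. -/
def Region (N : ISACNetwork V) : Set (ℝ × ℝ) :=
  { p | ∃ fr sr : V × V → ℝ, N.Valid fr sr ∧ N.sensOf sr = p.1 ∧ N.flowOf fr = p.2 }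

lemma mem_EA_swap (N : ISACNetwork V) {i j : V} (h : (i, j) ∈ N.EA) : (j, i) ∈ N.EA := by
  simp only [EA, Finset.mem_filter] at h ⊢
  exact ⟨N.symm i j h.1, h.2.2, h.2.1⟩

lemma mem_E_of_mem_EA (N : ISACNetwork V) {e : V × V} (h : e ∈ N.EA) : e ∈ N.E :=
  (Finset.mem_filter.mp h).1

lemma ne_of_mem_EA (N : ISACNetwork V) {i j : V} (h : (i, j) ∈ N.EA) : i ≠ j := by
  rintro rfl
  exact N.irrefl i (N.mem_E_of_mem_EA h)

lemma filter_EA_mk_eq_pair (N : ISACNetwork V) {i j : V} (h : (i, j) ∈ N.EA) :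
    N.EA.filter (fun e => Function.uncurry Sym2.mk e = Sym2.mk i j) = {(i, j), (j, i)} := by
  ext ⟨a, b⟩
  simp only [Finset.mem_filter, Finset.mem_insert, Finset.mem_singleton, Prod.mk.injEq,
    Function.uncurry_apply_pair, Sym2.eq_iff]
  constructor
  · exact And.right
  · rintro (⟨rfl, rfl⟩ | ⟨rfl, rfl⟩)
    · exact ⟨h, Or.inl ⟨rfl, rfl⟩⟩
    · exact ⟨N.mem_EA_swap h, Or.inr ⟨rfl, rfl⟩⟩

lemma sum_EA_eq_sum_UA (N : ISACNetwork V) (g : V × V → ℝ)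
    (hg : ∀ i j : V, (i, j) ∈ N.EA → g (i, j) + g (j, i) = N.c (Sym2.mk i j)) :
    ∑ e ∈ N.EA, g e = ∑ u ∈ N.UA, N.c u := by
  rw [← Finset.sum_fiberwise_of_maps_to (g := Function.uncurry Sym2.mk) (t := N.UA)
    (fun e he => Finset.mem_image_of_mem _ he) g]
  refine Finset.sum_congr rfl fun u hu => ?_
  obtain ⟨⟨i, j⟩, hij, rfl⟩ := Finset.mem_image.mp hu
  have hne := N.ne_of_mem_EA hij
  rw [Function.uncurry_apply_pair, N.filter_EA_mk_eq_pair hij,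
    Finset.sum_pair (by simp [hne]), hg i j hij]

namespace Valid

variable {N : ISACNetwork V} {fr sr : V × V → ℝ}

lemma comm_add_comm_swap_le (hv : N.Valid fr sr) {i j : V} (hij : (i, j) ∈ N.E) :
    fr (i, j) + fr (j, i) ≤ N.c (Sym2.mk i j) := by
  obtain ⟨-, hs0, ca, -, hsplit, hfs, -⟩ := hv
  have hji := N.symm i j hij
  linarith [hfs _ hij, hfs _ hji, hs0 _ hij, hs0 _ hji, hsplit i j hij]

lemma comm_eq_zero_of_sensOf_eq (hv : N.Valid fr sr) (hsens : N.sensOf sr = ∑ u ∈ N.UA, N.c u)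
    {e : V × V} (he : e ∈ N.EA) : fr e = 0 := by
  obtain ⟨hf0, -, ca, -, hsplit, hfs, -⟩ := hv
  have hf0' : ∀ e ∈ N.EA, 0 ≤ fr e := fun e he => hf0 e (N.mem_E_of_mem_EA he)
  have hca : ∑ e ∈ N.EA, ca e = ∑ u ∈ N.UA, N.c u :=
    N.sum_EA_eq_sum_UA ca fun i j hij => hsplit i j (N.mem_E_of_mem_EA hij)
  have hle : ∑ e ∈ N.EA, (fr e + sr e) ≤ ∑ e ∈ N.EA, ca e :=
    Finset.sum_le_sum fun e he => hfs e (N.mem_E_of_mem_EA he)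
  rw [Finset.sum_add_distrib] at hle
  have hsum : ∑ e ∈ N.EA, fr e = 0 :=
    le_antisymm (by unfold sensOf at hsens; linarith) (Finset.sum_nonneg hf0')
  exact (Finset.sum_eq_zero_iff_of_nonneg hf0').mp hsum e he

end Valid

noncomputable def halfSlack (N : ISACNetwork V) (fr : V × V → ℝ) (e : V × V) : ℝ :=
  (N.c (Sym2.mk e.1 e.2) - fr e - fr e.swap) / 2

lemma valid_halfSlack (N : ISACNetwork V) {fr : V × V → ℝ} (hf0 : ∀ e ∈ N.E, 0 ≤ fr e)
    (hcap : ∀ i j : V, (i, j) ∈ N.E → fr (i, j) + fr (j, i) ≤ N.c (Sym2.mk i j))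
    (hin : ∀ i : V, (i, N.Tx) ∈ N.E → fr (i, N.Tx) = 0)
    (hout : ∀ j : V, (N.Rx, j) ∈ N.E → fr (N.Rx, j) = 0)
    (hcons : ∀ j : V, j ≠ N.Tx → j ≠ N.Rx →
      ∑ i ∈ Finset.univ.filter (fun i => (i, j) ∈ N.E), fr (i, j)
        = ∑ k ∈ Finset.univ.filter (fun k => (j, k) ∈ N.E), fr (j, k)) :
    N.Valid fr (N.halfSlack fr) := by
  have hslack : ∀ e ∈ N.E, 0 ≤ N.halfSlack fr e := by
    rintro ⟨i, j⟩ hij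
    simp only [halfSlack, Prod.swap_prod_mk]
    linarith [hcap i j hij]
  refine ⟨hf0, hslack, fr + N.halfSlack fr, fun e he => add_nonneg (hf0 e he) (hslack e he),
    fun i j _ => ?_, fun e _ => le_rfl, hin, hout, hcons⟩
  simp only [Pi.add_apply, halfSlack, Prod.swap_prod_mk, Sym2.eq_swap (a := j)]
  ring

lemma sensOf_halfSlack (N : ISACNetwork V) {fr : V × V → ℝ} (hEA : ∀ e ∈ N.EA, fr e = 0) :
    N.sensOf (N.halfSlack fr) = ∑ u ∈ N.UA, N.c u := by
  refine N.sum_EA_eq_sum_UA _ fun i j hij => ?_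
  simp only [halfSlack, Prod.swap_prod_mk, Sym2.eq_swap (a := j), hEA _ hij,
    hEA _ (N.mem_EA_swap hij)]
  ring

end ISACNetwork

/-- The maximum free-communication throughput `f̃ = max{f : (s*, f) ∈ R}`
equals the optimal value of the linear program that maximizes the throughput
over nonnegative communication rates vanishing on `E(A)`, respecting the
undirected link capacities, with no communication into the source or out of
the sink, and conserving flow at intermediate nodes. -/
theorem free_communication_lp {V : Type} [Fintype V] [DecidableEq V]
    (N : ISACNetwork V) (ftil : ℝ)
    (hftil : IsGreatest
      {f : ℝ | (∑ u ∈ N.UA, N.c u, f) ∈ N.Region} ftil) :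
    IsGreatest
      {f : ℝ | ∃ fr : V × V → ℝ,
        (∀ e ∈ N.E, 0 ≤ fr e) ∧
        (∀ e ∈ N.EA, fr e = 0) ∧
        (∀ i j : V, (i, j) ∈ N.E → fr (i, j) + fr (j, i) ≤ N.c (Sym2.mk i j)) ∧
        (∀ i : V, (i, N.Tx) ∈ N.E → fr (i, N.Tx) = 0) ∧
        (∀ j : V, (N.Rx, j) ∈ N.E → fr (N.Rx, j) = 0) ∧
        (∀ j : V, j ≠ N.Tx → j ≠ N.Rx →
          ∑ i ∈ Finset.univ.filter (fun i => (i, j) ∈ N.E), fr (i, j)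
            = ∑ k ∈ Finset.univ.filter (fun k => (j, k) ∈ N.E), fr (j, k)) ∧
        N.flowOf fr = f} ftil := by
  obtain ⟨⟨fr, sr, hv, hsens, hflow⟩, hub⟩ := hftil
  refine ⟨⟨fr, hv.1, fun e he => hv.comm_eq_zero_of_sensOf_eq hsens he,
    fun i j hij => hv.comm_add_comm_swap_le hij, ?_⟩, ?_⟩
  · obtain ⟨-, -, -, -, -, -, hin, hout, hcons⟩ := hv
    exact ⟨hin, hout, hcons, hflow⟩
  · rintro f ⟨fr, hf0, hEA, hcap, hin, hout, hcons, rfl⟩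
    exact hub ⟨fr, N.halfSlack fr, N.valid_halfSlack hf0 hcap hin hout hcons,
      N.sensOf_halfSlack hEA, rfl⟩
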